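/- Let D ≥ 1 be an integer and let Q ∈ 𝒬(ℝ⁺) satisfy Q(0) = 0 and ∫_0^∞ x^D dQ(x) < ∞. Define F : ℝ → ℝ by D!·F(x) = ∫_0^∞ ( u^D − (u−x)^D · 1{u > x} ) dQ(u) for x ≥ 0 and F(x) = 0 for x < 0. Then F ∈ 𝒬^D(ℝ⁺); moreover (−1)^{D+1} F_+^{(D)}(x) = ∫_0^∞ 1{u > x} dQ(u) and (−1)^D [F_+^{(D)}(x) − F_+^{(D)}(0)] = Q(x) for all x ≥ 0. -/

import Mathlib

open MeasureTheory Filter Set Topology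
open scoped ENNReal

/-- The iterated (right) derivative: `rderiv F j` is the `j`-th order right derivative of `F`,
where the right derivative at `x` is the derivative within `Set.Ici x` at `x`. -/
noncomputable def rderiv (F : ℝ → ℝ) : ℕ → ℝ → ℝ
  | 0 => F
  | j + 1 => fun x => derivWithin (rderiv F j) (Set.Ici x) x

/-- A (not necessarily probability) distribution function on `[a,∞)`: nonnegative,
nondecreasing and right-continuous on `[a,∞)`, bounded, and extended by `0` on `(-∞,a)`.
This is membership in `𝒬[a,∞)` (and `𝒬(ℝ⁺)` when `a = 0`). -/
structure MemQ (a : ℝ) (F : ℝ → ℝ) : Prop where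
  zero : ∀ x : ℝ, x < a → F x = 0
  nonneg : ∀ x : ℝ, 0 ≤ F x
  mono : MonotoneOn F (Set.Ici a)
  right_cont : ∀ x ∈ Set.Ici a, ContinuousWithinAt F (Set.Ici x) x
  bddAbove : BddAbove (Set.range F)

/-- Membership in `𝒬^D[a,∞)`: a bounded distribution function on `[a,∞)` that is `D-1` times
differentiable on `[a,∞)` (two-sided derivatives at interior points, right derivatives at the
boundary), whose `D`-th order right derivative exists (and is finite) on `[a,∞)`
and is monotone there. -/
def MemQD (D : ℕ) (a : ℝ) (F : ℝ → ℝ) : Prop :=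
  MemQ a F ∧
  (∀ j < D, ∀ x ∈ Set.Ici a, HasDerivWithinAt (rderiv F j) (rderiv F (j + 1) x) (Set.Ici x) x) ∧
  (∀ j : ℕ, j + 1 < D → ∀ x ∈ Set.Ioi a, HasDerivAt (rderiv F j) (rderiv F (j + 1) x) x) ∧
  (MonotoneOn (rderiv F D) (Set.Ici a) ∨ AntitoneOn (rderiv F D) (Set.Ici a))

/-- The signed integral `∫ f dμ` with values in the extended reals, defined as the difference
of the lower integrals of the positive and negative parts of `f`. -/
noncomputable def eInt (f : ℝ → ℝ) (μ : Measure ℝ) : EReal :=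
  ((∫⁻ x, ENNReal.ofReal (f x) ∂μ : ℝ≥0∞) : EReal)
    - ((∫⁻ x, ENNReal.ofReal (-(f x)) ∂μ : ℝ≥0∞) : EReal)

/-- Iterated antiderivatives vanishing at `0`: `antider g 0 = g` and
`antider g (d+1) x = ∫_0^x antider g d`. So `antider g d = g^{(-d)}`. -/
noncomputable def antider (g : ℝ → ℝ) : ℕ → ℝ → ℝ
  | 0 => g
  | d + 1 => fun x => ∫ u in (0:ℝ)..x, antider g d u


/-!
Let `ν` be the Stieltjes measure of `Q` restricted to `(0, ∞)` and
`H m x = ∫_{u > x} (u - x)^m / m! dν(u)` its iterated tails, so that `H 0 x = ν (x, ∞)` and, by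
Tonelli, `H (m + 1) x = ∫_x^∞ H m`. Each `H m` is antitone, `H 0` is right-continuous and the
others are continuous, so the fundamental theorem of calculus gives `H (m + 1)` the right
derivative `-H m` everywhere, and a two-sided one where `H m` is continuous. On `[0, ∞)` we have
`F = H D 0 - H D`, hence `F₊^(j) = (-1)^(j-1) H (D - j)` for `1 ≤ j ≤ D`; in particular
`F₊^(D) x = (-1)^(D-1) ν (x, ∞)`, which is monotone and yields both identities since
`ν (0, x] = Q x`.
-/

open scoped Nat

lemma continuousWithinAt_measureReal_Ioi (ν : Measure ℝ) [IsFiniteMeasure ν] (x : ℝ) :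
    ContinuousWithinAt (fun t => ν.real (Ioi t)) (Ici x) x := by
  rw [← continuousWithinAt_Ioi_iff_Ici]
  have h := tendsto_measure_biInter_gt (μ := ν) (s := Iic) (a := x)
    (fun _ _ => measurableSet_Iic.nullMeasurableSet) (fun _ _ _ hij => Iic_subset_Iic.2 hij)
    ⟨x + 1, by linarith, measure_ne_top ν _⟩
  have hI : ⋂ r > x, Iic r = Iic x := by
    ext t
    simp only [mem_iInter, mem_Iic]
    exact ⟨fun h => le_of_forall_gt_imp_ge_of_dense h, fun h r hr => h.trans hr.le⟩
  rw [hI] at h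
  have hcompl : (fun t => ν.real (Ioi t)) = fun t => ν.real univ - ν.real (Iic t) :=
    funext fun t => by rw [← compl_Iic, measureReal_compl measurableSet_Iic]
  rw [hcompl]
  exact tendsto_const_nhds.sub ((ENNReal.tendsto_toReal (measure_ne_top _ _)).comp h)

lemma integral_sub_pow_div_factorial (m : ℕ) (x u : ℝ) :
    ∫ t in x..u, (u - t) ^ m / (m ! : ℝ) = (u - x) ^ (m + 1) / ((m + 1)! : ℝ) := by
  rw [intervalIntegral.integral_div, intervalIntegral.integral_comp_sub_left (fun s => s ^ m),
    integral_pow, Nat.factorial_succ]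
  push_cast
  field_simp
  ring

lemma lintegral_Ioi_lintegral_Ioi_sub_pow (ν : Measure ℝ) [SFinite ν] (m : ℕ) (x : ℝ) :
    ∫⁻ t in Ioi x, ∫⁻ u in Ioi t, ENNReal.ofReal ((u - t) ^ m / (m ! : ℝ)) ∂ν
      = ∫⁻ u in Ioi x, ENNReal.ofReal ((u - x) ^ (m + 1) / ((m + 1)! : ℝ)) ∂ν := by
  set k : ℝ → ℝ → ℝ≥0∞ := fun t u =>
    (Ioi t).indicator (fun u => ENNReal.ofReal ((u - t) ^ m / (m ! : ℝ))) u
  have hk : Measurable (Function.uncurry k) := by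
    change Measurable ({p : ℝ × ℝ | p.1 < p.2}.indicator
      fun p => ENNReal.ofReal ((p.2 - p.1) ^ m / (m ! : ℝ)))
    exact (Measurable.ennreal_ofReal (by fun_prop)).indicator
      (measurableSet_lt measurable_fst measurable_snd)
  calc ∫⁻ t in Ioi x, ∫⁻ u in Ioi t, ENNReal.ofReal ((u - t) ^ m / (m ! : ℝ)) ∂ν
      = ∫⁻ t in Ioi x, ∫⁻ u in Ioi x, k t u ∂ν := by
        refine setLIntegral_congr_fun measurableSet_Ioi fun t ht => ?_
        rw [lintegral_indicator measurableSet_Ioi, Measure.restrict_restrict measurableSet_Ioi,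
          inter_eq_left.2 (Ioi_subset_Ioi (le_of_lt ht))]
    _ = ∫⁻ u in Ioi x, ∫⁻ t in Ioi x, k t u ∂volume ∂ν := lintegral_lintegral_swap hk.aemeasurable
    _ = _ := by
        refine setLIntegral_congr_fun measurableSet_Ioi fun u hu => ?_
        change ∫⁻ t in Ioi x,
          (Iio u).indicator (fun t => ENNReal.ofReal ((u - t) ^ m / (m ! : ℝ))) t = _
        rw [lintegral_indicator measurableSet_Iio, Measure.restrict_restrict measurableSet_Iio,
          Iio_inter_Ioi, Measure.restrict_congr_set Ioo_ae_eq_Ioc, ← integral_sub_pow_div_factorial,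
          intervalIntegral.integral_of_le hu.le, ofReal_integral_eq_lintegral_ofReal]
        · exact (Continuous.integrableOn_Icc (by fun_prop)).mono_set Ioc_subset_Icc_self
        · filter_upwards [ae_restrict_mem measurableSet_Ioc] with t ht
          have : 0 ≤ u - t := sub_nonneg.2 ht.2
          positivity

noncomputable def iteratedTail (ν : Measure ℝ) (m : ℕ) (x : ℝ) : ℝ :=
  ∫ u in Ioi x, (u - x) ^ m / (m ! : ℝ) ∂ν

lemma iteratedTail_zero (ν : Measure ℝ) (x : ℝ) : iteratedTail ν 0 x = ν.real (Ioi x) := by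
  simp [iteratedTail]

lemma iteratedTail_nonneg (ν : Measure ℝ) (m : ℕ) (x : ℝ) : 0 ≤ iteratedTail ν m x :=
  setIntegral_nonneg measurableSet_Ioi fun u hu => by
    have : 0 ≤ u - x := sub_nonneg.2 (le_of_lt hu)
    positivity

section IteratedTail

variable {ν : Measure ℝ} [IsFiniteMeasure ν] {n m : ℕ}

lemma integrable_sub_pow (hν : MemLp id n ν) (hm : m ≤ n) (x : ℝ) :
    Integrable (fun u => (u - x) ^ m) ν := by
  have hsub : MemLp (fun u => u - x) m ν :=
    (hν.sub (memLp_const x)).mono_exponent (by exact_mod_cast hm)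
  exact hsub.integrable_norm_pow'.mono (by fun_prop) (ae_of_all _ fun u => by simp [norm_pow])

lemma iteratedTail_antitone (hν : MemLp id n ν) (hm : m ≤ n) : Antitone (iteratedTail ν m) := by
  intro a b hab
  calc iteratedTail ν m b
      ≤ ∫ u in Ioi b, (u - a) ^ m / (m ! : ℝ) ∂ν := by
        refine setIntegral_mono_on ((integrable_sub_pow hν hm b).div_const _).integrableOn
          ((integrable_sub_pow hν hm a).div_const _).integrableOn measurableSet_Ioi
          fun u hu => ?_
        gcongr
        exact sub_nonneg.2 (le_of_lt hu)
    _ ≤ iteratedTail ν m a := by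
        refine setIntegral_mono_set ((integrable_sub_pow hν hm a).div_const _).integrableOn
          ?_ (Ioi_subset_Ioi hab).eventuallyLE
        filter_upwards [ae_restrict_mem measurableSet_Ioi] with u hu
        have : 0 ≤ u - a := sub_nonneg.2 (le_of_lt hu)
        positivity

lemma lintegral_iteratedTail (hν : MemLp id n ν) (hm : m + 1 ≤ n) (x : ℝ) :
    ∫⁻ t in Ioi x, ENNReal.ofReal (iteratedTail ν m t)
      = ENNReal.ofReal (iteratedTail ν (m + 1) x) := by
  have hofReal : ∀ k ≤ n, ∀ y, ENNReal.ofReal (iteratedTail ν k y)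
      = ∫⁻ u in Ioi y, ENNReal.ofReal ((u - y) ^ k / (k ! : ℝ)) ∂ν := fun k hk y => by
    refine ofReal_integral_eq_lintegral_ofReal
      ((integrable_sub_pow hν hk y).div_const _).integrableOn ?_
    filter_upwards [ae_restrict_mem measurableSet_Ioi] with u hu
    have : 0 ≤ u - y := sub_nonneg.2 (le_of_lt hu)
    positivity
  simp_rw [hofReal m (by omega), hofReal (m + 1) hm]
  exact lintegral_Ioi_lintegral_Ioi_sub_pow ν m x

lemma integrableOn_iteratedTail (hν : MemLp id n ν) (hm : m + 1 ≤ n) (x : ℝ) :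
    IntegrableOn (iteratedTail ν m) (Ioi x) := by
  refine ⟨(iteratedTail_antitone hν (by omega)).measurable.aestronglyMeasurable,
    (hasFiniteIntegral_iff_ofReal (ae_of_all _ (iteratedTail_nonneg ν m))).2 ?_⟩
  rw [lintegral_iteratedTail hν hm]
  exact ENNReal.ofReal_lt_top

lemma iteratedTail_succ (hν : MemLp id n ν) (hm : m + 1 ≤ n) (x : ℝ) :
    iteratedTail ν (m + 1) x = ∫ t in Ioi x, iteratedTail ν m t := by
  have h := lintegral_iteratedTail hν hm x
  rw [← ofReal_integral_eq_lintegral_ofReal (integrableOn_iteratedTail hν hm x)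
    (ae_of_all _ (iteratedTail_nonneg ν m))] at h
  exact ((ENNReal.ofReal_eq_ofReal_iff (setIntegral_nonneg measurableSet_Ioi
    fun t _ => iteratedTail_nonneg ν m t) (iteratedTail_nonneg ν _ x)).1 h).symm

lemma iteratedTail_succ_eq_sub_integral (hν : MemLp id n ν) (hm : m + 1 ≤ n) :
    iteratedTail ν (m + 1)
      = fun x => iteratedTail ν (m + 1) 0 - ∫ t in 0..x, iteratedTail ν m t := by
  ext x
  rw [← intervalIntegral.integral_Ioi_sub_Ioi' (integrableOn_iteratedTail hν hm 0)
    (integrableOn_iteratedTail hν hm x), iteratedTail_succ hν hm, iteratedTail_succ hν hm]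
  ring

lemma continuous_iteratedTail_succ (hν : MemLp id n ν) (hm : m + 1 ≤ n) :
    Continuous (iteratedTail ν (m + 1)) := by
  rw [iteratedTail_succ_eq_sub_integral hν hm]
  exact continuous_const.sub (intervalIntegral.continuous_primitive
    (fun _ _ => (iteratedTail_antitone hν (by omega)).intervalIntegrable) 0)

lemma continuousWithinAt_iteratedTail (hν : MemLp id n ν) (hm : m ≤ n) (x : ℝ) :
    ContinuousWithinAt (iteratedTail ν m) (Ici x) x := by
  cases m with
  | zero =>
    simp_rw [funext (iteratedTail_zero ν)]
    exact continuousWithinAt_measureReal_Ioi ν x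
  | succ m => exact (continuous_iteratedTail_succ hν hm).continuousWithinAt

lemma hasDerivWithinAt_iteratedTail_succ (hν : MemLp id n ν) (hm : m + 1 ≤ n) {x : ℝ}
    (hc : ContinuousWithinAt (iteratedTail ν m) (Ici x) x) :
    HasDerivWithinAt (iteratedTail ν (m + 1)) (-iteratedTail ν m x) (Ici x) x := by
  have hanti := iteratedTail_antitone hν (Nat.le_of_succ_le hm)
  rw [iteratedTail_succ_eq_sub_integral hν hm]
  exact (intervalIntegral.integral_hasDerivWithinAt_right hanti.intervalIntegrable
    hanti.measurable.stronglyMeasurable.stronglyMeasurableAtFilter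
    (hc.mono Ioi_subset_Ici_self)).const_sub _

lemma hasDerivAt_iteratedTail_succ (hν : MemLp id n ν) (hm : m + 1 ≤ n) {x : ℝ}
    (hc : ContinuousAt (iteratedTail ν m) x) :
    HasDerivAt (iteratedTail ν (m + 1)) (-iteratedTail ν m x) x := by
  have hanti := iteratedTail_antitone hν (Nat.le_of_succ_le hm)
  rw [iteratedTail_succ_eq_sub_integral hν hm]
  exact (intervalIntegral.integral_hasDerivAt_right hanti.intervalIntegrable
    hanti.measurable.stronglyMeasurable.stronglyMeasurableAtFilter hc).const_sub _

end IteratedTail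

noncomputable def tailDeriv (ν : Measure ℝ) (n : ℕ) : ℕ → ℝ → ℝ
  | 0 => fun x => iteratedTail ν n 0 - iteratedTail ν n x
  | k + 1 => fun x => (-1) ^ k * iteratedTail ν (n - (k + 1)) x

lemma tailDeriv_self_succ (ν : Measure ℝ) (E : ℕ) (x : ℝ) :
    tailDeriv ν (E + 1) (E + 1) x = (-1) ^ E * ν.real (Ioi x) := by
  simp [tailDeriv, iteratedTail_zero]

section TailDeriv

variable {ν : Measure ℝ} {n : ℕ}

lemma hasDerivWithinAt_tailDeriv_of_iteratedTail {s : Set ℝ} {x : ℝ} (j : ℕ)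
    (h : HasDerivWithinAt (iteratedTail ν (n - j)) (-iteratedTail ν (n - (j + 1)) x) s x) :
    HasDerivWithinAt (tailDeriv ν n j) (tailDeriv ν n (j + 1) x) s x := by
  cases j with
  | zero => simpa [tailDeriv] using h.const_sub (iteratedTail ν n 0)
  | succ k =>
    rw [show tailDeriv ν n (k + 1 + 1) x = (-1) ^ k * -iteratedTail ν (n - (k + 1 + 1)) x by
      simp [tailDeriv, pow_succ]]
    exact h.const_mul _

variable [IsFiniteMeasure ν]

lemma hasDerivWithinAt_tailDeriv (hν : MemLp id n ν) {j : ℕ} (hj : j < n) (x : ℝ) :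
    HasDerivWithinAt (tailDeriv ν n j) (tailDeriv ν n (j + 1) x) (Ici x) x := by
  refine hasDerivWithinAt_tailDeriv_of_iteratedTail j ?_
  rw [show n - j = n - (j + 1) + 1 by omega]
  exact hasDerivWithinAt_iteratedTail_succ hν (by omega)
    (continuousWithinAt_iteratedTail hν (by omega) x)

lemma hasDerivAt_tailDeriv (hν : MemLp id n ν) {j : ℕ} (hj : j + 1 < n) (x : ℝ) :
    HasDerivAt (tailDeriv ν n j) (tailDeriv ν n (j + 1) x) x := by
  rw [← hasDerivWithinAt_univ]
  refine hasDerivWithinAt_tailDeriv_of_iteratedTail j ?_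
  obtain ⟨m, hm⟩ : ∃ m, n - (j + 1) = m + 1 := ⟨n - (j + 2), by omega⟩
  rw [hasDerivWithinAt_univ, show n - j = n - (j + 1) + 1 by omega, hm]
  exact hasDerivAt_iteratedTail_succ hν (by omega)
    (continuous_iteratedTail_succ hν (by omega)).continuousAt

lemma memQ_of_eqOn_tailDeriv {F : ℝ → ℝ} (hν : MemLp id n ν) (hF0 : ∀ x < 0, F x = 0)
    (hF : EqOn F (tailDeriv ν n 0) (Ici 0)) : MemQ 0 F := by
  have hanti := iteratedTail_antitone hν le_rfl
  have hle : ∀ x, F x ≤ iteratedTail ν n 0 := fun x => by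
    rcases lt_or_ge x 0 with hx | hx
    · rw [hF0 x hx]
      exact iteratedTail_nonneg ν n 0
    · rw [hF hx]
      exact sub_le_self _ (iteratedTail_nonneg ν n x)
  refine ⟨hF0, fun x => ?_, fun a ha b hb hab => ?_, fun x hx => ?_,
    ⟨_, forall_mem_range.2 hle⟩⟩
  · rcases lt_or_ge x 0 with hx | hx
    · exact (hF0 x hx).ge
    · rw [hF hx]
      exact sub_nonneg.2 (hanti hx)
  · rw [hF ha, hF hb]
    exact sub_le_sub_left (hanti hab) _
  · exact (continuousWithinAt_const.sub (continuousWithinAt_iteratedTail hν le_rfl x)).congr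
      (fun y hy => hF (Ici_subset_Ici.2 hx hy)) (hF hx)

end TailDeriv

lemma eqOn_rderiv_of_hasDerivWithinAt {F : ℝ → ℝ} {g : ℕ → ℝ → ℝ} {a : ℝ} {N : ℕ}
    (h0 : EqOn F (g 0) (Ici a))
    (hg : ∀ j < N, ∀ x ∈ Ici a, HasDerivWithinAt (g j) (g (j + 1) x) (Ici x) x) :
    ∀ j ≤ N, EqOn (rderiv F j) (g j) (Ici a)
  | 0, _ => h0
  | j + 1, hj => fun x hx => by
    have hEq : EqOn (rderiv F j) (g j) (Ici x) :=
      (eqOn_rderiv_of_hasDerivWithinAt h0 hg j (by omega)).mono (Ici_subset_Ici.2 hx)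
    change derivWithin (rderiv F j) (Ici x) x = g (j + 1) x
    rw [derivWithin_congr hEq (hEq self_mem_Ici)]
    exact (hg j hj x hx).derivWithin (uniqueDiffOn_Ici x x self_mem_Ici)

lemma memQD_of_eqOn {F : ℝ → ℝ} {g : ℕ → ℝ → ℝ} {a : ℝ} {N : ℕ} (hF : MemQ a F)
    (h0 : EqOn F (g 0) (Ici a))
    (hg : ∀ j < N, ∀ x ∈ Ici a, HasDerivWithinAt (g j) (g (j + 1) x) (Ici x) x)
    (hg' : ∀ j : ℕ, j + 1 < N → ∀ x ∈ Ioi a, HasDerivAt (g j) (g (j + 1) x) x)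
    (hmono : MonotoneOn (g N) (Ici a) ∨ AntitoneOn (g N) (Ici a)) : MemQD N a F := by
  have hR := eqOn_rderiv_of_hasDerivWithinAt h0 hg
  refine ⟨hF, fun j hj x hx => ?_, fun j hj x hx => ?_, ?_⟩
  · rw [hR (j + 1) hj hx]
    exact (hg j hj x hx).congr (fun y hy => hR j hj.le (mem_Ici.2 (le_trans hx hy)))
      (hR j hj.le hx)
  · rw [hR (j + 1) hj.le (mem_Ici.2 (le_of_lt hx))]
    refine (hg' j hj x hx).congr_of_eventuallyEq ?_
    filter_upwards [Ioi_mem_nhds hx] with y hy using hR j (by omega) (mem_Ici.2 (le_of_lt hy))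
  · exact hmono.imp (fun h => h.congr (hR N le_rfl).symm) fun h => h.congr (hR N le_rfl).symm

lemma memQD_of_eqOn_tailDeriv {ν : Measure ℝ} [IsFiniteMeasure ν] {E : ℕ} {F : ℝ → ℝ}
    (hν : MemLp id (E + 1 : ℕ) ν) (hF0 : ∀ x < 0, F x = 0)
    (hF : EqOn F (tailDeriv ν (E + 1) 0) (Ici 0)) :
    MemQD (E + 1) 0 F := by
  refine memQD_of_eqOn (memQ_of_eqOn_tailDeriv hν hF0 hF) hF
    (fun j hj x _ => hasDerivWithinAt_tailDeriv hν hj x)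
    (fun j hj x _ => hasDerivAt_tailDeriv hν hj x) ?_
  have hanti : Antitone fun x => ν.real (Ioi x) := fun a b hab =>
    measureReal_mono (Ioi_subset_Ioi hab)
  simp_rw [funext (tailDeriv_self_succ ν E)]
  rcases neg_one_pow_eq_or ℝ E with h | h
  · exact Or.inr fun a _ b _ hab => by simpa [h] using hanti hab
  · exact Or.inl fun a _ b _ hab => by simpa [h] using hanti hab

lemma memLp_id_of_lintegral_pow_ne_top {ν : Measure ℝ} {n : ℕ} (hn : n ≠ 0)
    (hpos : ∀ᵐ u ∂ν, 0 < u) (h : ∫⁻ u, ENNReal.ofReal (u ^ n) ∂ν ≠ ⊤) : MemLp id n ν := by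
  rw [← integrable_norm_rpow_iff aestronglyMeasurable_id (by simpa using hn) (by simp)]
  simp only [ENNReal.toReal_natCast, Real.rpow_natCast, id]
  refine ⟨by fun_prop, (hasFiniteIntegral_iff_ofReal (ae_of_all _ fun u => by positivity)).2 ?_⟩
  refine lt_of_eq_of_lt (lintegral_congr_ae ?_) h.lt_top
  filter_upwards [hpos] with u hu
  rw [Real.norm_of_nonneg hu.le]

lemma eqOn_tailDeriv_zero {ν : Measure ℝ} [IsFiniteMeasure ν] {n : ℕ} {F : ℝ → ℝ}
    (hν : MemLp id n ν) (hpos : ∀ᵐ u ∂ν, 0 < u)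
    (hF : ∀ x, 0 ≤ x →
      (n ! : ℝ) * F x = ∫ u, (u ^ n - (u - x) ^ n * (if x < u then 1 else 0)) ∂ν) :
    EqOn F (tailDeriv ν n 0) (Ici 0) := by
  intro x hx
  have hfac : (n ! : ℝ) ≠ 0 := by positivity
  have hH : ∀ y, (n ! : ℝ) * iteratedTail ν n y = ∫ u in Ioi y, (u - y) ^ n ∂ν := fun y => by
    rw [iteratedTail, integral_div, mul_div_cancel₀ _ hfac]
  have hind : (fun u : ℝ => (u - x) ^ n * (if x < u then (1 : ℝ) else 0))
      = (Ioi x).indicator fun u => (u - x) ^ n := by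
    ext u
    by_cases h : x < u <;> simp [h]
  have hint : Integrable (fun u : ℝ => u ^ n) ν := by
    simpa using integrable_sub_pow hν le_rfl 0
  have hint' : Integrable (fun u : ℝ => (u - x) ^ n * (if x < u then (1 : ℝ) else 0)) ν := by
    rw [hind]
    exact (integrable_sub_pow hν le_rfl x).indicator measurableSet_Ioi
  refine mul_left_cancel₀ hfac ?_
  rw [hF x hx, integral_sub hint hint', hind, integral_indicator measurableSet_Ioi]
  simp only [tailDeriv, mul_sub, hH, sub_zero,
    Measure.restrict_eq_self_of_ae_mem (s := Ioi 0) hpos]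

namespace MemQ

variable {Q : ℝ → ℝ}

lemma isFiniteMeasure_stieltjesFunction {a : ℝ} (hQ : MemQ a Q) (hQm : Monotone Q) :
    IsFiniteMeasure hQm.stieltjesFunction.measure := by
  obtain ⟨C, hC⟩ := hQ.bddAbove
  refine hQm.stieltjesFunction.isFiniteMeasure_of_forall_abs_le (C := C) fun x => ?_
  rw [Monotone.stieltjesFunction_eq, abs_le]
  have hQC : ∀ y, Q y ≤ C := fun y => hC (mem_range_self y)
  constructor
  · linarith [hQ.nonneg x, hQC x, hQm.le_rightLim (le_refl x)]
  · exact (hQm.rightLim_le (lt_add_one x)).trans (hQC _)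

lemma stieltjesFunction_eq {a : ℝ} (hQ : MemQ a Q) (hQm : Monotone Q) {x : ℝ} (hx : a ≤ x) :
    hQm.stieltjesFunction x = Q x := by
  rw [Monotone.stieltjesFunction_eq]
  exact hQm.continuousWithinAt_Ioi_iff_rightLim_eq.1
    ((hQ.right_cont x hx).mono Ioi_subset_Ici_self)

lemma measureReal_Ioc_stieltjesFunction {a : ℝ} (hQ : MemQ a Q) (hQm : Monotone Q) {x y : ℝ}
    (hx : a ≤ x) (hxy : x ≤ y) : hQm.stieltjesFunction.measure.real (Ioc x y) = Q y - Q x := by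
  rw [measureReal_def, StieltjesFunction.measure_Ioc,
    ENNReal.toReal_ofReal (sub_nonneg.2 (hQm.stieltjesFunction.mono hxy)),
    hQ.stieltjesFunction_eq hQm hx, hQ.stieltjesFunction_eq hQm (hx.trans hxy)]

end MemQ

/-- Converse representation: if `Q ∈ 𝒬(ℝ⁺)` with `Q(0) = 0` and
`∫_0^∞ x^D dQ < ∞`, and `F` is defined by
`D! F(x) = ∫_0^∞ (u^D - (u-x)^D 1{u > x}) dQ(u)` for `x ≥ 0` and `F(x) = 0` for `x < 0`,
then `F ∈ 𝒬^D(ℝ⁺)`, and moreover `(-1)^(D+1) F₊^(D)(x) = ∫_0^∞ 1{u > x} dQ(u)` and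
`(-1)^D [F₊^(D)(x) - F₊^(D)(0)] = Q(x)` for all `x ≥ 0`. -/
theorem stmt_9 (D : ℕ) (hD : 1 ≤ D) (Q : ℝ → ℝ) (hQ : MemQ 0 Q) (hQ0 : Q 0 = 0)
    (hQm : Monotone Q)
    (hmom : ∫⁻ x in Set.Ioi (0:ℝ), ENNReal.ofReal (x ^ D) ∂hQm.stieltjesFunction.measure ≠ ⊤)
    (F : ℝ → ℝ)
    (hFdef : ∀ x : ℝ, 0 ≤ x →
      (D.factorial : ℝ) * F x =
        ∫ u in Set.Ioi (0:ℝ),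
          (u ^ D - (u - x) ^ D * (if x < u then 1 else 0)) ∂hQm.stieltjesFunction.measure)
    (hFneg : ∀ x : ℝ, x < 0 → F x = 0) :
    MemQD D 0 F ∧
    ∀ x : ℝ, 0 ≤ x →
      (-1 : ℝ) ^ (D + 1) * rderiv F D x =
        ((hQm.stieltjesFunction.measure.restrict (Set.Ioi 0)) (Set.Ioi x)).toReal ∧
      (-1 : ℝ) ^ D * (rderiv F D x - rderiv F D 0) = Q x := by
  obtain ⟨E, rfl⟩ : ∃ E, D = E + 1 := ⟨D - 1, by omega⟩
  have := hQ.isFiniteMeasure_stieltjesFunction hQm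
  set ν := hQm.stieltjesFunction.measure.restrict (Ioi 0)
  have hpos : ∀ᵐ u ∂ν, 0 < u := ae_restrict_mem measurableSet_Ioi
  have hν : MemLp id (E + 1 : ℕ) ν := memLp_id_of_lintegral_pow_ne_top (by omega) hpos hmom
  have hF := eqOn_tailDeriv_zero hν hpos hFdef
  have hR : ∀ x, 0 ≤ x → rderiv F (E + 1) x = (-1) ^ E * ν.real (Ioi x) := fun x hx => by
    rw [eqOn_rderiv_of_hasDerivWithinAt hF (fun j hj x _ => hasDerivWithinAt_tailDeriv hν hj x)
      (E + 1) le_rfl hx, tailDeriv_self_succ]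
  refine ⟨memQD_of_eqOn_tailDeriv hν hFneg hF, fun x hx => ⟨?_, ?_⟩⟩
  · rw [hR x hx, ← mul_assoc, ← pow_add, Even.neg_one_pow ⟨E + 1, by ring⟩, one_mul,
      measureReal_def]
  · have hsign : (-1 : ℝ) ^ (E + 1) * (-1) ^ E = -1 := by
      rw [← pow_add]
      exact Odd.neg_one_pow ⟨E, by ring⟩
    have hIoc : ν.real (Ioi 0) - ν.real (Ioi x) = Q x := by
      rw [← Ioc_union_Ioi_eq_Ioi hx, measureReal_union (Ioc_disjoint_Ioi le_rfl)
        measurableSet_Ioi, add_sub_cancel_right, measureReal_restrict_apply measurableSet_Ioc,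
        inter_eq_left.2 Ioc_subset_Ioi_self, hQ.measureReal_Ioc_stieltjesFunction hQm le_rfl hx,
        hQ0, sub_zero]
    rw [hR x hx, hR 0 le_rfl]
    linear_combination (ν.real (Ioi x) - ν.real (Ioi 0)) * hsign + hIoc
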